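/- Fix β > 0, an integer N ≥ 2, and exponent vectors η^a ∈ ℕ^N, η^b ∈ ℕ^{N−1} with s = ∑_j η^a_j + ∑_j η^b_j. With L = N/2 + βN(N−1)/4 and r = √(2L), one has the identity M_r(N,η) · Γ(L + s/2) = L^{s/2} · Γ(L) · M(N,η). -/

import Mathlib

open MeasureTheory Real Filter Finset

/-- The weight `w(b) = ∏_{j=1}^{n} b_j^{jβ−1}` (here `j`-th coordinate is zero-indexed,
so the exponent is `(j+1)β − 1`). -/
noncomputable def wgt (β : ℝ) {n : ℕ} (b : Fin n → ℝ) : ℝ :=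
  ∏ j, b j ^ (((j : ℕ) : ℝ) * β + β - 1)

/-- `T(a,b) = ∑_j a_j² + 2 ∑_j b_j²`. -/
noncomputable def TT {N n : ℕ} (a : Fin N → ℝ) (b : Fin n → ℝ) : ℝ :=
  ∑ j, a j ^ 2 + 2 * ∑ j, b j ^ 2

/-- The β-Hermite matrix-entry moment `M(N,η)`. -/
noncomputable def Mom (β : ℝ) (N : ℕ) (ηa : Fin N → ℕ) (ηb : Fin (N - 1) → ℕ) : ℝ :=
  (∫ p in {p : (Fin N → ℝ) × (Fin (N - 1) → ℝ) | ∀ j, 0 < p.2 j},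
      (∏ j, p.1 j ^ ηa j) * (∏ j, p.2 j ^ ηb j) *
        Real.exp (-TT p.1 p.2 / 2) * wgt β p.2) /
  (∫ p in {p : (Fin N → ℝ) × (Fin (N - 1) → ℝ) | ∀ j, 0 < p.2 j},
      Real.exp (-TT p.1 p.2 / 2) * wgt β p.2)

/-- Surface integral over the sphere of radius `r` centered at `0` in the euclidean
space `ℝ^N × ℝ^{N−1} ≅ ℝ^{2N−1}`. -/
noncomputable def sphereIntegralS (N : ℕ) (r : ℝ)
    (f : EuclideanSpace ℝ (Fin N ⊕ Fin (N - 1)) → ℝ) : ℝ :=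
  r ^ (2 * N - 2) *
    ∫ ω, f (r • (ω : EuclideanSpace ℝ (Fin N ⊕ Fin (N - 1))))
      ∂((volume : Measure (EuclideanSpace ℝ (Fin N ⊕ Fin (N - 1)))).toSphere)

/-- The fixed trace matrix-entry moment `M_r(N,η)`, an integral over the portion
`S_r⁺` of the sphere of radius `r` where all `c_j > 0`, with `b_j = c_j/√2`. -/
noncomputable def MomFT (β : ℝ) (N : ℕ) (r : ℝ)
    (ηa : Fin N → ℕ) (ηb : Fin (N - 1) → ℕ) : ℝ :=
  (sphereIntegralS N r fun p =>
    Set.indicator {q : EuclideanSpace ℝ (Fin N ⊕ Fin (N - 1)) | ∀ j, 0 < q (Sum.inr j)}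
      (fun q =>
        (∏ j, q (Sum.inl j) ^ ηa j) * (∏ j, (q (Sum.inr j) / Real.sqrt 2) ^ ηb j) *
          wgt β (fun j => q (Sum.inr j) / Real.sqrt 2)) p) /
  (sphereIntegralS N r fun p =>
    Set.indicator {q : EuclideanSpace ℝ (Fin N ⊕ Fin (N - 1)) | ∀ j, 0 < q (Sum.inr j)}
      (fun q => wgt β (fun j => q (Sum.inr j) / Real.sqrt 2)) p)

/-!
Both moments are ratios of integrals of one function on `ℝ^N × ℝ^{N-1}`: the monomial
`F(a, c) = ∏ a_j^{η^a_j} ∏ (c_j/√2)^{η^b_j + jβ - 1}` restricted to `c > 0`, which is homogeneous of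
degree `s + d` with `d = ∑_j (jβ - 1)`. In polar coordinates, `∫ F e^{-|x|²/2}` splits as
`(∫_{S^{2N-2}} F) · 2^{u-1} Γ(u)` with `2u = (2N - 1) + s + d = 2L + s`; substituting `c = √2 b`
identifies the same Gaussian integral with `(√2)^{N-1}` times the numerator of `M(N, η)`.
Dividing by the case `η = 0`, where `u = L`, and rescaling the sphere to radius `r = √(2L)`, which
contributes `r^s = (2L)^{s/2}`, gives the identity.
-/

open Set Metric

lemma integral_Ioi_rpow_mul_exp_neg_sq_div_two {q : ℝ} (hq : -1 < q) :
    ∫ r in Ioi (0 : ℝ), r ^ q * exp (-r ^ 2 / 2) = 2 ^ ((q - 1) / 2) * Gamma ((q + 1) / 2) := by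
  have h := integral_rpow_mul_exp_neg_mul_rpow two_pos hq (by norm_num : (0 : ℝ) < 1 / 2)
  have hexp : ∀ r : ℝ, -(1 / 2) * r ^ (2 : ℝ) = -r ^ 2 / 2 := fun r => by
    rw [rpow_two]; ring
  have htwo : (1 / 2 : ℝ) ^ (-(q + 1) / 2) * (1 / 2) = 2 ^ ((q - 1) / 2) := by
    rw [one_div, inv_rpow zero_le_two, ← rpow_neg zero_le_two, neg_div, neg_neg,
      ← rpow_neg_one, ← rpow_add two_pos]
    ring_nf
  simp_rw [hexp] at h
  rw [h, htwo]

lemma integral_volumeIoiPow (n : ℕ) (g : ℝ → ℝ) :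
    ∫ r : Ioi (0 : ℝ), g r ∂(Measure.volumeIoiPow n) = ∫ r in Ioi (0 : ℝ), r ^ n * g r := by
  simp only [Measure.volumeIoiPow, ENNReal.ofReal]
  rw [integral_withDensity_eq_integral_smul
      ((measurable_subtype_coe.pow_const _).real_toNNReal) _,
    integral_subtype_comap measurableSet_Ioi fun r => (r ^ n).toNNReal • g r]
  refine setIntegral_congr_fun measurableSet_Ioi fun r hr => ?_
  rw [NNReal.smul_def, Real.coe_toNNReal _ (pow_nonneg hr.out.le _), smul_eq_mul]

section Polar

variable {E : Type*} [NormedAddCommGroup E] [NormedSpace ℝ E] [FiniteDimensional ℝ E]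
  [MeasurableSpace E] [BorelSpace E] [Nontrivial E] (μ : Measure E) [μ.IsAddHaarMeasure]

-- No integrability hypothesis is needed: the polar change of variables is measure preserving and
-- `integral_prod_mul` holds for the Bochner integral unconditionally.
theorem integral_mul_exp_neg_norm_sq_div_two_of_homogeneous {f : E → ℝ} {d : ℝ}
    (hf : ∀ t : ℝ, 0 < t → ∀ x, f (t • x) = t ^ d * f x)
    (hd : 0 < (Module.finrank ℝ E : ℝ) + d) :
    ∫ x, f x * exp (-‖x‖ ^ 2 / 2) ∂μ =
      (∫ ω, f ω ∂μ.toSphere) *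
        (2 ^ ((Module.finrank ℝ E + d) / 2 - 1) * Gamma ((Module.finrank ℝ E + d) / 2)) := by
  set n := Module.finrank ℝ E
  have hn : 1 ≤ n := Module.finrank_pos
  have hpolar : ∀ x : ({(0 : E)}ᶜ : Set E), f x * exp (-‖(x : E)‖ ^ 2 / 2) =
      f (homeomorphUnitSphereProd E x).1 * ((homeomorphUnitSphereProd E x).2 ^ d *
        exp (-(homeomorphUnitSphereProd E x).2 ^ 2 / 2)) := by
    intro x
    have hx : 0 < ‖(x : E)‖ := norm_pos_iff.2 x.2
    have hfx : f x = ‖(x : E)‖ ^ d * f (‖(x : E)‖⁻¹ • (x : E)) := by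
      rw [← hf _ hx, smul_inv_smul₀ hx.ne']
    simp only [homeomorphUnitSphereProd_apply_fst_coe, homeomorphUnitSphereProd_apply_snd_coe]
    rw [hfx]
    ring
  have hradial : ∫ r in Ioi (0 : ℝ), r ^ (n - 1) * (r ^ d * exp (-r ^ 2 / 2)) =
      2 ^ ((n + d) / 2 - 1) * Gamma ((n + d) / 2) := by
    have hq : ((n - 1 : ℕ) : ℝ) + d = n - 1 + d := by rw [Nat.cast_sub hn, Nat.cast_one]
    rw [setIntegral_congr_fun measurableSet_Ioi fun r (hr : 0 < r) => by
        rw [← mul_assoc, ← rpow_natCast, ← rpow_add hr, hq],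
      integral_Ioi_rpow_mul_exp_neg_sq_div_two (by linarith)]
    ring_nf
  calc ∫ x, f x * exp (-‖x‖ ^ 2 / 2) ∂μ
      = ∫ x : ({(0 : E)}ᶜ : Set E), f x * exp (-‖(x : E)‖ ^ 2 / 2) ∂μ.comap (↑) := by
        rw [integral_subtype_comap (measurableSet_singleton _).compl
          fun x => f x * exp (-‖x‖ ^ 2 / 2), restrict_compl_singleton]
    _ = ∫ p : sphere (0 : E) 1 × Ioi (0 : ℝ), f p.1 * ((p.2 : ℝ) ^ d * exp (-(p.2 : ℝ) ^ 2 / 2))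
          ∂μ.toSphere.prod (.volumeIoiPow (n - 1)) := by
        rw [← μ.measurePreserving_homeomorphUnitSphereProd.integral_comp
          (Homeomorph.measurableEmbedding _)]
        exact integral_congr_ae (.of_forall hpolar)
    _ = _ := by
        rw [integral_prod_mul (fun ω : sphere (0 : E) 1 => f ω)
          (fun r : Ioi (0 : ℝ) => (r : ℝ) ^ d * exp (-(r : ℝ) ^ 2 / 2)),
          integral_volumeIoiPow _ fun r => r ^ d * exp (-r ^ 2 / 2), hradial]

end Polar

theorem EuclideanSpace.integral_prod_apply {ι : Type*} [Fintype ι] (G : ι → ℝ → ℝ) :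
    ∫ x : EuclideanSpace ℝ ι, ∏ i, G i (x i) = ∏ i, ∫ t : ℝ, G i t := by
  rw [← integral_fintype_prod_volume_eq_prod G,
    ← (EuclideanSpace.volume_preserving_symm_measurableEquiv_toLp ι).symm.integral_comp']
  rfl

noncomputable def gaussFactor (k : ℕ) (t : ℝ) : ℝ := t ^ k * exp (-t ^ 2 / 2)

noncomputable def halfLineFactor (k : ℕ) (α t : ℝ) : ℝ :=
  if 0 < t then t ^ k * t ^ α * exp (-t ^ 2) else 0

lemma integral_halfLineFactor_div_sqrt_two (k : ℕ) (α : ℝ) :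
    ∫ t : ℝ, halfLineFactor k α (t / √2) = √2 * ∫ t : ℝ, halfLineFactor k α t := by
  rw [Measure.integral_comp_div, abs_of_pos (by positivity), smul_eq_mul]

section Moments

variable {m n : ℕ} (ηa : Fin m → ℕ) (ηb : Fin n → ℕ) (α : Fin n → ℝ)

noncomputable def momentIntegral : ℝ :=
  ∫ p in {p : (Fin m → ℝ) × (Fin n → ℝ) | ∀ j, 0 < p.2 j},
    (∏ j, p.1 j ^ ηa j) * (∏ j, p.2 j ^ ηb j) * exp (-TT p.1 p.2 / 2) * ∏ j, p.2 j ^ α j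

noncomputable def orthantMonomial : EuclideanSpace ℝ (Fin m ⊕ Fin n) → ℝ :=
  {q | ∀ j, 0 < q (Sum.inr j)}.indicator fun q =>
    (∏ j, q (Sum.inl j) ^ ηa j) * (∏ j, (q (Sum.inr j) / √2) ^ ηb j) *
      ∏ j, (q (Sum.inr j) / √2) ^ α j

noncomputable def sphereMoment : ℝ :=
  ∫ ω, orthantMonomial ηa ηb α ω
    ∂(volume : Measure (EuclideanSpace ℝ (Fin m ⊕ Fin n))).toSphere

lemma orthantMonomial_zero :
    orthantMonomial (0 : Fin m → ℕ) (0 : Fin n → ℕ) α =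
      {q | ∀ j, 0 < q (Sum.inr j)}.indicator fun q => ∏ j, (q (Sum.inr j) / √2) ^ α j := by
  simp only [orthantMonomial, Pi.zero_apply, pow_zero, prod_const_one, one_mul]

lemma orthantMonomial_smul {t : ℝ} (ht : 0 < t) (x : EuclideanSpace ℝ (Fin m ⊕ Fin n)) :
    orthantMonomial ηa ηb α (t • x) =
      t ^ (((∑ j, ηa j + ∑ j, ηb j : ℕ) : ℝ) + ∑ j, α j) * orthantMonomial ηa ηb α x := by
  have hsmul : ∀ i, (t • x) i = t * x i := fun i => rfl
  set S := {q : EuclideanSpace ℝ (Fin m ⊕ Fin n) | ∀ j, 0 < q (Sum.inr j)}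
  have hmem : t • x ∈ S ↔ x ∈ S := forall_congr' fun j => by
    rw [hsmul, mul_pos_iff_of_pos_left ht]
  by_cases hx : x ∈ S
  · rw [orthantMonomial, indicator_of_mem (hmem.2 hx), indicator_of_mem hx]
    have hpos : ∀ j, 0 < x (Sum.inr j) / √2 := fun j => div_pos (hx j) (by positivity)
    have hηa : ∏ j, (t * x (Sum.inl j)) ^ ηa j = t ^ (∑ j, ηa j) * ∏ j, x (Sum.inl j) ^ ηa j := by
      rw [← prod_pow_eq_pow_sum, ← prod_mul_distrib]
      simp_rw [mul_pow]
    have hηb : ∏ j, (t * (x (Sum.inr j) / √2)) ^ ηb j =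
        t ^ (∑ j, ηb j) * ∏ j, (x (Sum.inr j) / √2) ^ ηb j := by
      rw [← prod_pow_eq_pow_sum, ← prod_mul_distrib]
      simp_rw [mul_pow]
    have hα : ∏ j, (t * (x (Sum.inr j) / √2)) ^ α j =
        t ^ (∑ j, α j) * ∏ j, (x (Sum.inr j) / √2) ^ α j := by
      rw [rpow_sum_of_pos ht, ← prod_mul_distrib]
      simp_rw [mul_rpow ht.le (hpos _).le]
    simp only [hsmul, mul_div_assoc, hηa, hηb, hα]
    rw [rpow_add ht, rpow_natCast, pow_add]
    ring
  · rw [orthantMonomial, indicator_of_notMem (mt hmem.1 hx),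
      indicator_of_notMem hx, mul_zero]

lemma indicator_moment_eq_prod (p : (Fin m → ℝ) × (Fin n → ℝ)) :
    {p : (Fin m → ℝ) × (Fin n → ℝ) | ∀ j, 0 < p.2 j}.indicator
      (fun p => (∏ j, p.1 j ^ ηa j) * (∏ j, p.2 j ^ ηb j) * exp (-TT p.1 p.2 / 2) *
        ∏ j, p.2 j ^ α j) p =
      (∏ j, gaussFactor (ηa j) (p.1 j)) * ∏ j, halfLineFactor (ηb j) (α j) (p.2 j) := by
  set S := {p : (Fin m → ℝ) × (Fin n → ℝ) | ∀ j, 0 < p.2 j}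
  by_cases hp : p ∈ S
  · have hexp : exp (-TT p.1 p.2 / 2) =
        (∏ j, exp (-p.1 j ^ 2 / 2)) * ∏ j, exp (-p.2 j ^ 2) := by
      rw [← exp_sum, ← exp_sum, ← exp_add, TT]
      congr 1
      simp only [sum_neg_distrib, ← sum_div]
      ring
    rw [indicator_of_mem hp, hexp]
    simp only [gaussFactor, halfLineFactor, if_pos (hp _), prod_mul_distrib]
    ring
  · obtain ⟨j, hj⟩ := not_forall.1 hp
    rw [indicator_of_notMem hp, prod_eq_zero (mem_univ j), mul_zero]
    rw [halfLineFactor, if_neg hj]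

lemma orthantMonomial_mul_exp_eq_prod (x : EuclideanSpace ℝ (Fin m ⊕ Fin n)) :
    orthantMonomial ηa ηb α x * exp (-‖x‖ ^ 2 / 2) =
      (∏ j, gaussFactor (ηa j) (x (Sum.inl j))) *
        ∏ j, halfLineFactor (ηb j) (α j) (x (Sum.inr j) / √2) := by
  set S := {q : EuclideanSpace ℝ (Fin m ⊕ Fin n) | ∀ j, 0 < q (Sum.inr j)}
  by_cases hx : x ∈ S
  · have hexp : exp (-‖x‖ ^ 2 / 2) =
        (∏ j, exp (-x (Sum.inl j) ^ 2 / 2)) * ∏ j, exp (-(x (Sum.inr j) / √2) ^ 2) := by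
      rw [← exp_sum, ← exp_sum, ← exp_add, EuclideanSpace.norm_sq_eq, Fintype.sum_sum_type]
      congr 1
      simp only [Real.norm_eq_abs, sq_abs, div_pow, sq_sqrt zero_le_two, sum_neg_distrib,
        ← sum_div]
      ring_nf
    rw [orthantMonomial, indicator_of_mem hx, hexp]
    simp only [gaussFactor, halfLineFactor, div_pos (hx _) (sqrt_pos.2 two_pos), if_true,
      prod_mul_distrib]
    ring
  · obtain ⟨j, hj⟩ := not_forall.1 hx
    rw [orthantMonomial, indicator_of_notMem hx, zero_mul, prod_eq_zero (mem_univ j), mul_zero]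
    rw [halfLineFactor, if_neg fun h => hj ((div_pos_iff_of_pos_right (by positivity)).1 h)]

lemma momentIntegral_eq_prod :
    momentIntegral ηa ηb α =
      (∏ j, ∫ t, gaussFactor (ηa j) t) * ∏ j, ∫ t, halfLineFactor (ηb j) (α j) t := by
  have hS : MeasurableSet {p : (Fin m → ℝ) × (Fin n → ℝ) | ∀ j, 0 < p.2 j} := by
    simp only [ofPred_forall]
    exact .iInter fun j => measurableSet_lt measurable_const measurable_snd.eval
  rw [momentIntegral, ← integral_indicator hS,
    integral_congr_ae (.of_forall (indicator_moment_eq_prod ηa ηb α)), Measure.volume_eq_prod,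
    integral_prod_mul (fun a : Fin m → ℝ => ∏ j, gaussFactor (ηa j) (a j))
      (fun b : Fin n → ℝ => ∏ j, halfLineFactor (ηb j) (α j) (b j)),
    integral_fintype_prod_volume_eq_prod, integral_fintype_prod_volume_eq_prod]

lemma integral_orthantMonomial_mul_exp_eq_prod :
    ∫ x, orthantMonomial ηa ηb α x * exp (-‖x‖ ^ 2 / 2) =
      √2 ^ n * ((∏ j, ∫ t, gaussFactor (ηa j) t) *
        ∏ j, ∫ t, halfLineFactor (ηb j) (α j) t) := by
  let G : Fin m ⊕ Fin n → ℝ → ℝ :=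
    Sum.elim (fun j => gaussFactor (ηa j)) fun j t => halfLineFactor (ηb j) (α j) (t / √2)
  have hG : ∀ x : EuclideanSpace ℝ (Fin m ⊕ Fin n),
      orthantMonomial ηa ηb α x * exp (-‖x‖ ^ 2 / 2) = ∏ i, G i (x i) := fun x => by
    rw [orthantMonomial_mul_exp_eq_prod, Fintype.prod_sum_type]
    rfl
  simp_rw [hG, EuclideanSpace.integral_prod_apply, Fintype.prod_sum_type, G, Sum.elim_inl,
    Sum.elim_inr, integral_halfLineFactor_div_sqrt_two, prod_mul_distrib, prod_const, card_univ,
    Fintype.card_fin]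
  ring

theorem sqrt_two_pow_mul_momentIntegral (hm : 0 < m) {u : ℝ} (hu₀ : 0 < u)
    (hu : (m : ℝ) + n + (((∑ j, ηa j + ∑ j, ηb j : ℕ) : ℝ) + ∑ j, α j) = 2 * u) :
    √2 ^ n * momentIntegral ηa ηb α = sphereMoment ηa ηb α * (2 ^ (u - 1) * Gamma u) := by
  have : Nonempty (Fin m ⊕ Fin n) := ⟨.inl ⟨0, hm⟩⟩
  have hdim : (Module.finrank ℝ (EuclideanSpace ℝ (Fin m ⊕ Fin n)) : ℝ) = m + n := by
    simp only [finrank_euclideanSpace, Fintype.card_sum, Fintype.card_fin, Nat.cast_add]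
  have h := integral_mul_exp_neg_norm_sq_div_two_of_homogeneous volume
    (fun t ht x => orthantMonomial_smul ηa ηb α ht x) (by rw [hdim, hu]; positivity)
  rw [hdim, hu, mul_div_cancel_left₀ _ two_ne_zero,
    integral_orthantMonomial_mul_exp_eq_prod] at h
  rw [momentIntegral_eq_prod, h, sphereMoment]

end Moments

lemma sphereIntegralS_of_homogeneous {N : ℕ} {r d : ℝ} (hr : 0 < r)
    {f : EuclideanSpace ℝ (Fin N ⊕ Fin (N - 1)) → ℝ}
    (hf : ∀ t : ℝ, 0 < t → ∀ x, f (t • x) = t ^ d * f x) :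
    sphereIntegralS N r f =
      r ^ (2 * N - 2) * (r ^ d * ∫ ω, f ω
        ∂(volume : Measure (EuclideanSpace ℝ (Fin N ⊕ Fin (N - 1)))).toSphere) := by
  simp only [sphereIntegralS, hf r hr, integral_const_mul]

noncomputable def weightExponent (β : ℝ) {n : ℕ} (j : Fin n) : ℝ := (j : ℝ) * β + β - 1

lemma sum_weightExponent (β : ℝ) (n : ℕ) :
    ∑ j : Fin n, weightExponent β j = β * n * (n - 1) / 2 + β * n - n := by
  have hgauss : ∑ j : Fin n, (j : ℝ) = n * (n - 1) / 2 := by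
    induction n with
    | zero => simp
    | succ n ih =>
      rw [Fin.sum_univ_castSucc]
      simp only [Fin.val_castSucc, ih, Fin.val_last, Nat.cast_succ]
      ring
  simp only [weightExponent, sum_sub_distrib, sum_add_distrib, ← sum_mul, hgauss, sum_const,
    card_univ, Fintype.card_fin, nsmul_eq_mul]
  ring

section BetaHermite

variable (β : ℝ) {N : ℕ} (ηa : Fin N → ℕ) (ηb : Fin (N - 1) → ℕ)

lemma MomFT_eq_sphereMoment {r : ℝ} (hr : 0 < r) :
    MomFT β N r ηa ηb = r ^ ((∑ j, ηa j + ∑ j, ηb j : ℕ) : ℝ) *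
      (sphereMoment ηa ηb (weightExponent β) /
        sphereMoment (0 : Fin N → ℕ) (0 : Fin (N - 1) → ℕ) (weightExponent β)) := by
  have hnum := sphereIntegralS_of_homogeneous (N := N) hr
    fun t ht x => orthantMonomial_smul ηa ηb (weightExponent β) ht x
  have hden := sphereIntegralS_of_homogeneous (N := N) hr
    fun t ht x => orthantMonomial_smul 0 0 (weightExponent β) ht x
  simp only [Pi.zero_apply, sum_const_zero, add_zero, Nat.cast_zero, zero_add] at hden
  have hMomFT : MomFT β N r ηa ηb =
      sphereIntegralS N r (orthantMonomial ηa ηb (weightExponent β)) /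
        sphereIntegralS N r (orthantMonomial 0 0 (weightExponent β)) := by
    rw [orthantMonomial_zero]
    rfl
  rw [hMomFT, hnum, hden, ← sphereMoment, ← sphereMoment, rpow_add hr,
    mul_div_mul_left _ _ (pow_ne_zero _ hr.ne'), mul_assoc, mul_div_assoc,
    mul_div_mul_left _ _ (rpow_pos_of_pos hr _).ne']

lemma Mom_eq_sphereMoment (hN : 1 ≤ N) {L : ℝ} (hL₀ : 0 < L)
    (hL : L = (N : ℝ) / 2 + β * N * ((N : ℝ) - 1) / 4) :
    Mom β N ηa ηb =
      sphereMoment ηa ηb (weightExponent β) *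
          (2 ^ (L + ((∑ j, ηa j + ∑ j, ηb j : ℕ) : ℝ) / 2 - 1) *
            Gamma (L + ((∑ j, ηa j + ∑ j, ηb j : ℕ) : ℝ) / 2)) /
        (sphereMoment (0 : Fin N → ℕ) (0 : Fin (N - 1) → ℕ) (weightExponent β) *
          (2 ^ (L - 1) * Gamma L)) := by
  have hMom : Mom β N ηa ηb =
      momentIntegral ηa ηb (weightExponent β) /
        momentIntegral (0 : Fin N → ℕ) (0 : Fin (N - 1) → ℕ) (weightExponent β) := by
    simp only [momentIntegral, Pi.zero_apply, pow_zero, prod_const_one, one_mul]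
    rfl
  have hdim : (N : ℝ) + ((N - 1 : ℕ) : ℝ) + ∑ j : Fin (N - 1), weightExponent β j = 2 * L := by
    rw [sum_weightExponent, Nat.cast_sub hN, hL]
    push_cast
    ring
  have h₁ := sqrt_two_pow_mul_momentIntegral ηa ηb (weightExponent β) hN
    (u := L + ((∑ j, ηa j + ∑ j, ηb j : ℕ) : ℝ) / 2) (by positivity) (by linarith)
  have h₀ := sqrt_two_pow_mul_momentIntegral 0 0 (weightExponent β) hN hL₀
    (by simpa only [Pi.zero_apply, sum_const_zero, add_zero, Nat.cast_zero, zero_add] using hdim)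
  rw [hMom, ← mul_div_mul_left _ _ (pow_ne_zero (N - 1) (sqrt_pos.2 two_pos).ne'), h₁, h₀]

end BetaHermite

/-- The exact identity `M_r(N,η)·Γ(L+s/2) = L^{s/2}·Γ(L)·M(N,η)` with
`L = N/2 + βN(N−1)/4` and `r = √(2L)`. -/
theorem moment_identity (β : ℝ) (hβ : 0 < β) (N : ℕ) (hN : 2 ≤ N)
    (ηa : Fin N → ℕ) (ηb : Fin (N - 1) → ℕ) (s : ℕ)
    (hs : s = ∑ j, ηa j + ∑ j, ηb j) (L : ℝ)
    (hL : L = (N : ℝ) / 2 + β * N * ((N : ℝ) - 1) / 4) :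
    MomFT β N (Real.sqrt (2 * L)) ηa ηb * Real.Gamma (L + (s : ℝ) / 2) =
      L ^ ((s : ℝ) / 2) * Real.Gamma L * Mom β N ηa ηb := by
  subst hs
  have hL₀ : 0 < L := by
    have hN' : (2 : ℝ) ≤ N := by exact_mod_cast hN
    have : 0 ≤ β * N * ((N : ℝ) - 1) :=
      mul_nonneg (mul_nonneg hβ.le (Nat.cast_nonneg N)) (by linarith)
    rw [hL]
    linarith
  rw [MomFT_eq_sphereMoment β ηa ηb (by positivity),
    Mom_eq_sphereMoment β ηa ηb (by omega) hL₀ hL, mul_div_mul_comm]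
  set s : ℝ := ((∑ j, ηa j + ∑ j, ηb j : ℕ) : ℝ)
  have hr : √(2 * L) ^ s = 2 ^ (s / 2) * L ^ (s / 2) := by
    rw [sqrt_eq_rpow, ← rpow_mul (by positivity), one_div_mul_eq_div, mul_rpow zero_le_two hL₀.le]
  have htwo : (2 : ℝ) ^ (L + s / 2 - 1) = 2 ^ (s / 2) * 2 ^ (L - 1) := by
    rw [← rpow_add two_pos]
    ring_nf
  rw [hr, htwo]
  field_simp [(Gamma_pos_of_pos hL₀).ne']
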